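/- For λ < 0 and all x > 0, 1 - F_λ(x) > (2φ(x)φ(λx) / (|λ|(1+λ²)x²)) · [1 - ((1+λ²)²/λ²) x^{-2}], where F_λ is the skew-normal cdf with parameter λ. -/

import Mathlib

/-!
For `λ < 0` and `t > 0`, `Φ(λt)` is the Gaussian tail at `|λ|t`. The Mills-ratio bound
`1 - Φ(u) > φ(u) (1/u - 1/u³)` together with `2φ(t)φ(λt) = e^{-(1+λ²)t²/2} / π` bounds the
integrand of `1 - F_λ(x) = ∫_x^∞ 2φ(t)Φ(λt) dt` from below by
`π⁻¹ e^{-(1+λ²)t²/2} (s/|λ| - s³/|λ|³)`, `s = 1/t`, and this dominates the derivative of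
`G(t) = c e^{-(1+λ²)t²/2} (k t⁻⁴ - t⁻²)`, `c = (π|λ|(1+λ²))⁻¹`, `k = (1+λ²)²/λ²`.
Since `G` vanishes at infinity, `1 - F_λ(x) > -G(x)`, the claimed bound. The Mills bound itself
comes from comparing `φ` with the derivative `φ(t)(1 - 3t⁻⁴)` of `φ(t)(t⁻³ - t⁻¹)`.
-/

open Real MeasureTheory Filter

noncomputable def stdPhi (x : ℝ) : ℝ := (Real.sqrt (2 * Real.pi))⁻¹ * Real.exp (-x ^ 2 / 2)

noncomputable def stdCdf (x : ℝ) : ℝ := ∫ t in Set.Iic x, stdPhi t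

noncomputable def snCdf (l x : ℝ) : ℝ := ∫ t in Set.Iic x, 2 * stdPhi t * stdCdf (l * t)

open Set Topology

lemma integrableOn_Ioi_mul_comp_inv {w h : ℝ → ℝ} {x : ℝ} (hx : 0 < x)
    (hw : IntegrableOn w (Ioi x)) (hh : Continuous h) :
    IntegrableOn (fun t => w t * h t⁻¹) (Ioi x) := by
  obtain ⟨C, hC⟩ :=
    isCompact_Icc.exists_bound_of_continuousOn (hh.continuousOn (s := Icc 0 x⁻¹))
  refine hw.mul_bdd (c := C) (hh.measurable.comp measurable_inv).aestronglyMeasurable ?_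
  filter_upwards [ae_restrict_mem measurableSet_Ioi] with t ht
  exact hC _ ⟨inv_nonneg.2 (hx.trans ht).le, inv_anti₀ hx ht.le⟩

lemma Filter.Tendsto.mul_comp_inv_atTop {w h : ℝ → ℝ} (hw : Tendsto w atTop (𝓝 0))
    (hh : ContinuousAt h 0) : Tendsto (fun t => w t * h t⁻¹) atTop (𝓝 0) := by
  simpa using hw.mul (hh.tendsto.comp tendsto_inv_atTop_zero)

lemma tendsto_exp_neg_mul_sq_atTop {b : ℝ} (hb : 0 < b) :
    Tendsto (fun t => exp (-b * t ^ 2)) atTop (𝓝 0) :=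
  tendsto_exp_atBot.comp ((tendsto_pow_atTop two_ne_zero).const_mul_atTop_of_neg (neg_lt_zero.2 hb))

lemma neg_lt_integral_Ioi_of_hasDerivAt_of_lt {f g G : ℝ → ℝ} {x : ℝ}
    (hG : ∀ t ∈ Ici x, HasDerivAt G (g t) t) (hg : IntegrableOn g (Ioi x))
    (hG_top : Tendsto G atTop (𝓝 0)) (hf : IntegrableOn f (Ioi x))
    (hgf : ∀ t ∈ Ioi x, g t < f t) :
    -G x < ∫ t in Ioi x, f t := by
  have hFTC : ∫ t in Ioi x, g t = -G x := by
    rw [integral_Ioi_of_hasDerivAt_of_tendsto' hG hg hG_top, zero_sub]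
  have hpos : 0 < ∫ t in Ioi x, (f t - g t) := by
    rw [setIntegral_pos_iff_support_of_nonneg_ae (f := fun t => f t - g t) _ (hf.sub hg),
      inter_eq_self_of_subset_right fun t ht =>
        Function.mem_support.2 (sub_ne_zero.2 (hgf t ht).ne'), volume_Ioi]
    · exact ENNReal.zero_lt_top
    · filter_upwards [ae_restrict_mem measurableSet_Ioi] with t ht
      exact sub_nonneg.2 (hgf t ht).le
  rw [integral_sub hf hg, hFTC] at hpos
  linarith

lemma stdPhi_eq_gaussianPDFReal : stdPhi = ProbabilityTheory.gaussianPDFReal 0 1 := by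
  ext x
  simp [stdPhi, ProbabilityTheory.gaussianPDFReal]

lemma stdPhi_eq (x : ℝ) : stdPhi x = (√(2 * π))⁻¹ * exp (-(1 / 2) * x ^ 2) := by
  rw [stdPhi]; ring_nf

lemma stdPhi_pos (x : ℝ) : 0 < stdPhi x := by
  rw [stdPhi]; positivity

lemma stdPhi_neg (x : ℝ) : stdPhi (-x) = stdPhi x := by
  simp [stdPhi]

lemma integrable_stdPhi : Integrable stdPhi :=
  stdPhi_eq_gaussianPDFReal ▸ ProbabilityTheory.integrable_gaussianPDFReal 0 1

lemma integral_stdPhi : ∫ x, stdPhi x = 1 :=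
  stdPhi_eq_gaussianPDFReal ▸ ProbabilityTheory.integral_gaussianPDFReal_eq_one 0 one_ne_zero

lemma hasDerivAt_stdPhi (x : ℝ) : HasDerivAt stdPhi (-x * stdPhi x) x := by
  refine (((hasDerivAt_pow 2 x).neg.div_const 2).exp.const_mul (√(2 * π))⁻¹).congr_deriv ?_
  simp only [stdPhi, Pi.neg_apply]
  ring

lemma tendsto_stdPhi_atTop : Tendsto stdPhi atTop (𝓝 0) := by
  have := (tendsto_exp_neg_mul_sq_atTop (one_half_pos (α := ℝ))).const_mul (√(2 * π))⁻¹
  rw [mul_zero] at this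
  exact this.congr fun x => (stdPhi_eq x).symm

lemma two_mul_stdPhi_mul_stdPhi_mul (l t : ℝ) :
    2 * stdPhi t * stdPhi (l * t) = π⁻¹ * exp (-((1 + l ^ 2) / 2) * t ^ 2) := by
  have h2π : √(2 * π) * √(2 * π) = 2 * π := mul_self_sqrt (by positivity)
  rw [stdPhi, stdPhi, mul_assoc, mul_mul_mul_comm, ← mul_inv, h2π, ← exp_add]
  field_simp
  ring_nf

lemma stdCdf_nonneg (x : ℝ) : 0 ≤ stdCdf x :=
  setIntegral_nonneg measurableSet_Iic fun t _ => (stdPhi_pos t).le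

lemma stdCdf_le_one (x : ℝ) : stdCdf x ≤ 1 :=
  integral_stdPhi ▸
    setIntegral_le_integral integrable_stdPhi (.of_forall fun t => (stdPhi_pos t).le)

lemma monotone_stdCdf : Monotone stdCdf := fun _ _ hab =>
  setIntegral_mono_set integrable_stdPhi.integrableOn (.of_forall fun t => (stdPhi_pos t).le)
    (Iic_subset_Iic.2 hab).eventuallyLE

lemma stdCdf_neg (x : ℝ) : stdCdf (-x) = ∫ t in Ioi x, stdPhi t := by
  rw [stdCdf, ← integral_comp_neg_Ioi]
  simp_rw [stdPhi_neg]

lemma stdCdf_add_stdCdf_neg (x : ℝ) : stdCdf x + stdCdf (-x) = 1 := by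
  rw [stdCdf_neg, stdCdf, intervalIntegral.integral_Iic_add_Ioi integrable_stdPhi.integrableOn
    integrable_stdPhi.integrableOn, integral_stdPhi]

lemma hasDerivAt_stdPhi_mul_inv_pow_three_sub_inv {t : ℝ} (ht : t ≠ 0) :
    HasDerivAt (fun s => stdPhi s * (s⁻¹ ^ 3 - s⁻¹)) (stdPhi t * (1 - 3 * t⁻¹ ^ 4)) t := by
  have hinv := hasDerivAt_inv ht
  refine ((hasDerivAt_stdPhi t).mul ((hinv.fun_pow 3).sub hinv)).congr_deriv ?_
  simp only [Pi.sub_apply, inv_pow]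
  field_simp
  ring

theorem stdPhi_mul_sub_lt_stdCdf_neg {u : ℝ} (hu : 0 < u) :
    stdPhi u * (u⁻¹ - u⁻¹ ^ 3) < stdCdf (-u) := by
  have key := neg_lt_integral_Ioi_of_hasDerivAt_of_lt
    (fun t ht => hasDerivAt_stdPhi_mul_inv_pow_three_sub_inv (hu.trans_le ht).ne')
    (integrableOn_Ioi_mul_comp_inv (h := fun s => 1 - 3 * s ^ 4) hu integrable_stdPhi.integrableOn
      (by fun_prop))
    (tendsto_stdPhi_atTop.mul_comp_inv_atTop (h := fun s => s ^ 3 - s) (by fun_prop))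
    integrable_stdPhi.integrableOn
    (fun t ht => mul_lt_of_lt_one_right (stdPhi_pos t)
      (sub_lt_self _ (by have := hu.trans ht; positivity)))
  rw [stdCdf_neg]
  convert key using 1
  ring

lemma integrable_two_mul_stdPhi_mul_stdCdf (l : ℝ) :
    Integrable (fun t => 2 * stdPhi t * stdCdf (l * t)) :=
  (integrable_stdPhi.const_mul 2).mul_bdd (c := 1)
    ((monotone_stdCdf.measurable.comp (measurable_const_mul l)).aestronglyMeasurable)
    (.of_forall fun t => by
      rw [norm_of_nonneg (stdCdf_nonneg _)]
      exact stdCdf_le_one _)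

lemma integral_two_mul_stdPhi_mul_stdCdf (l : ℝ) :
    ∫ t, 2 * stdPhi t * stdCdf (l * t) = 1 := by
  have hsymm : ∫ t, 2 * stdPhi t * stdCdf (l * t) =
      ∫ t, (2 * stdPhi t - 2 * stdPhi t * stdCdf (l * t)) := by
    rw [← integral_neg_eq_self]
    congr 1 with t
    rw [stdPhi_neg, mul_neg]
    linear_combination 2 * stdPhi t * stdCdf_add_stdCdf_neg (l * t)
  rw [integral_sub (integrable_stdPhi.const_mul 2) (integrable_two_mul_stdPhi_mul_stdCdf l),
    integral_const_mul, integral_stdPhi] at hsymm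
  linarith

lemma one_sub_snCdf (l x : ℝ) :
    1 - snCdf l x = ∫ t in Ioi x, 2 * stdPhi t * stdCdf (l * t) := by
  rw [← integral_two_mul_stdPhi_mul_stdCdf l, snCdf, ← intervalIntegral.integral_Iic_add_Ioi
    (integrable_two_mul_stdPhi_mul_stdCdf l).integrableOn
    (integrable_two_mul_stdPhi_mul_stdCdf l).integrableOn, add_sub_cancel_left]

lemma hasDerivAt_exp_mul_inv_pow_four_sub_sq (a c k : ℝ) {t : ℝ} (ht : t ≠ 0) :
    HasDerivAt (fun s => exp (-(a / 2) * s ^ 2) * (c * (k * s⁻¹ ^ 4 - s⁻¹ ^ 2)))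
      (exp (-(a / 2) * t ^ 2) * (c * (a * t⁻¹ - (a * k - 2) * t⁻¹ ^ 3 - 4 * k * t⁻¹ ^ 5))) t := by
  have hinv := hasDerivAt_inv ht
  have hexp := ((hasDerivAt_pow 2 t).const_mul (-(a / 2))).exp
  have hpoly := (((hinv.fun_pow 4).const_mul k).sub (hinv.fun_pow 2)).const_mul c
  refine (hexp.mul hpoly).congr_deriv ?_
  simp only [Pi.sub_apply, inv_pow]
  field_simp
  ring

lemma lt_two_mul_stdPhi_mul_stdCdf_mul_of_neg {l t : ℝ} (hl : l < 0) (ht : 0 < t) :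
    π⁻¹ * exp (-((1 + l ^ 2) / 2) * t ^ 2) * ((|l| * t)⁻¹ - (|l| * t)⁻¹ ^ 3)
      < 2 * stdPhi t * stdCdf (l * t) := by
  have hlt : |l| * t = -(l * t) := by rw [abs_of_neg hl]; ring
  have hmills := stdPhi_mul_sub_lt_stdCdf_neg (mul_pos (abs_pos.2 hl.ne) ht)
  rw [hlt, neg_neg, stdPhi_neg] at hmills
  calc π⁻¹ * exp (-((1 + l ^ 2) / 2) * t ^ 2) * ((|l| * t)⁻¹ - (|l| * t)⁻¹ ^ 3)
      = 2 * stdPhi t * (stdPhi (l * t) * ((-(l * t))⁻¹ - (-(l * t))⁻¹ ^ 3)) := by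
        rw [hlt, ← two_mul_stdPhi_mul_stdPhi_mul]; ring
    _ < 2 * stdPhi t * stdCdf (l * t) :=
        mul_lt_mul_of_pos_left hmills (mul_pos two_pos (stdPhi_pos t))

lemma comparison_poly_le_mills_poly {l s : ℝ} (hl : l ≠ 0) (hs : 0 ≤ s) :
    (π * |l| * (1 + l ^ 2))⁻¹ * ((1 + l ^ 2) * s
        - ((1 + l ^ 2) * ((1 + l ^ 2) ^ 2 / l ^ 2) - 2) * s ^ 3
        - 4 * ((1 + l ^ 2) ^ 2 / l ^ 2) * s ^ 5)
      ≤ π⁻¹ * (|l|⁻¹ * s - (|l|⁻¹ * s) ^ 3) := by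
  rw [← sq_abs l]
  have hm := abs_pos.2 hl
  set m := |l|
  have hgap : π⁻¹ * (m⁻¹ * s - (m⁻¹ * s) ^ 3) - (π * m * (1 + m ^ 2))⁻¹ * ((1 + m ^ 2) * s
      - ((1 + m ^ 2) * ((1 + m ^ 2) ^ 2 / m ^ 2) - 2) * s ^ 3
      - 4 * ((1 + m ^ 2) ^ 2 / m ^ 2) * s ^ 5)
      = π⁻¹ * (m * (m ^ 2 + 3) / (1 + m ^ 2) * s ^ 3 + 4 * (1 + m ^ 2) / m ^ 3 * s ^ 5) := by
    field_simp
    ring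
  exact sub_nonneg.1 (hgap ▸ by positivity)

theorem stmt_4 (l : ℝ) (hl : l < 0) (x : ℝ) (hx : 0 < x) :
    1 - snCdf l x >
      (2 * stdPhi x * stdPhi (l * x) / (|l| * (1 + l ^ 2) * x ^ 2)) *
        (1 - ((1 + l ^ 2) ^ 2 / l ^ 2) * x⁻¹ ^ 2) := by
  have hRHS : (2 * stdPhi x * stdPhi (l * x) / (|l| * (1 + l ^ 2) * x ^ 2)) *
      (1 - ((1 + l ^ 2) ^ 2 / l ^ 2) * x⁻¹ ^ 2) = -(exp (-((1 + l ^ 2) / 2) * x ^ 2) *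
        ((π * |l| * (1 + l ^ 2))⁻¹ * ((1 + l ^ 2) ^ 2 / l ^ 2 * x⁻¹ ^ 4 - x⁻¹ ^ 2))) := by
    have hl_abs := abs_pos.2 hl.ne
    rw [two_mul_stdPhi_mul_stdPhi_mul]
    field_simp
    ring
  rw [gt_iff_lt, hRHS, one_sub_snCdf]
  have ha : 0 < (1 + l ^ 2) / 2 := by positivity
  refine neg_lt_integral_Ioi_of_hasDerivAt_of_lt
    (fun t ht => hasDerivAt_exp_mul_inv_pow_four_sub_sq _ _ _ (hx.trans_le ht).ne')
    (integrableOn_Ioi_mul_comp_inv hx (integrable_exp_neg_mul_sq ha).integrableOn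
      (h := fun s => _ * ((1 + l ^ 2) * s - _ * s ^ 3 - _ * s ^ 5)) (by fun_prop))
    ((tendsto_exp_neg_mul_sq_atTop ha).mul_comp_inv_atTop
      (h := fun s => _ * (_ * s ^ 4 - s ^ 2)) (by fun_prop))
    (integrable_two_mul_stdPhi_mul_stdCdf l).integrableOn fun t ht => ?_
  have ht : 0 < t := hx.trans ht
  calc _ ≤ exp (-((1 + l ^ 2) / 2) * t ^ 2) * (π⁻¹ * (|l|⁻¹ * t⁻¹ - (|l|⁻¹ * t⁻¹) ^ 3)) :=
        mul_le_mul_of_nonneg_left (comparison_poly_le_mills_poly hl.ne (inv_nonneg.2 ht.le))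
          (exp_pos _).le
    _ = π⁻¹ * exp (-((1 + l ^ 2) / 2) * t ^ 2) * ((|l| * t)⁻¹ - (|l| * t)⁻¹ ^ 3) := by
        rw [mul_inv]; ring
    _ < _ := lt_two_mul_stdPhi_mul_stdCdf_mul_of_neg hl ht
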